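/- Let α > γ > 0, σ ≥ μ > 0 and fix β > σ/γ. Then the function λ ↦ δ₂(β, λ) is strictly decreasing on (0, +∞), where δ₂(β, λ) = (1/(2λ))·(−μλ + βα b_β − σλ + βγ a_β + √((μλ − βα b_β + σλ − βγ a_β)² − 4(μσλ² − βα b_β σλ − βγ a_β μλ))). -/

import Mathlib

/-- The positive constant solution component `a_β`. -/
noncomputable def aβ (μ σ α γ β : ℝ) : ℝ := (β * α - μ) * σ / (β ^ 2 * α * γ - μ * σ)

/-- The positive constant solution component `b_β`. -/
noncomputable def bβ (μ σ α γ β : ℝ) : ℝ := (β * γ - σ) * μ / (β ^ 2 * α * γ - μ * σ)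

/-- The smaller eigenvalue `δ₁(β, λ)` of the matrix `D(β, λ)` (times λ). -/
noncomputable def delta₁ (μ σ α γ β lam : ℝ) : ℝ :=
  (1 / (2 * lam)) * (-(μ * lam) + β * α * bβ μ σ α γ β - σ * lam + β * γ * aβ μ σ α γ β -
    Real.sqrt ((μ * lam - β * α * bβ μ σ α γ β + σ * lam - β * γ * aβ μ σ α γ β) ^ 2 -
      4 * (μ * σ * lam ^ 2 - β * α * bβ μ σ α γ β * σ * lam -
        β * γ * aβ μ σ α γ β * μ * lam)))

/-- The larger eigenvalue `δ₂(β, λ)` of the matrix `D(β, λ)` (times λ). -/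
noncomputable def delta₂ (μ σ α γ β lam : ℝ) : ℝ :=
  (1 / (2 * lam)) * (-(μ * lam) + β * α * bβ μ σ α γ β - σ * lam + β * γ * aβ μ σ α γ β +
    Real.sqrt ((μ * lam - β * α * bβ μ σ α γ β + σ * lam - β * γ * aβ μ σ α γ β) ^ 2 -
      4 * (μ * σ * lam ^ 2 - β * α * bβ μ σ α γ β * σ * lam -
        β * γ * aβ μ σ α γ β * μ * lam)))

/-!
`δ₂(β, λ)` is the larger root `d` of `λ (d + μ) (d + σ) = A (d + σ) + B (d + μ)` with
`A = β α b_β > 0` and `B = β γ a_β > 0`. On that root `d + μ` and `d + σ` are positive, so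
`λ = A / (d + μ) + B / (d + σ)` expresses `λ` as an antitone function of `d`; hence the map
`λ ↦ d` is strictly decreasing.
-/

open Set

theorem strictAntiOn_of_leftInvOn_of_antitoneOn {α β : Type*} [Preorder α] [LinearOrder β]
    {f : α → β} {g : β → α} {s : Set α} {t : Set β} (hg : AntitoneOn g t) (hf : MapsTo f s t)
    (hgf : LeftInvOn g f s) : StrictAntiOn f s := by
  intro x hx y hy hxy
  by_contra! h
  have := hg (hf hx) (hf hy) h
  rw [hgf hx, hgf hy] at this
  exact this.not_gt hxy

section LargeRoot

variable {μ σ A B lam : ℝ}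

/-- Written exactly as `delta₂`, so that `delta₂_eq_largeRoot` holds by `rfl`. -/
noncomputable def largeRoot (μ σ A B lam : ℝ) : ℝ :=
  (1 / (2 * lam)) * (-(μ * lam) + A - σ * lam + B +
    Real.sqrt ((μ * lam - A + σ * lam - B) ^ 2 -
      4 * (μ * σ * lam ^ 2 - A * σ * lam - B * μ * lam)))

theorem largeRoot_eq :
    largeRoot μ σ A B lam =
      (A + B - (μ + σ) * lam + √(((σ - μ) * lam + A - B) ^ 2 + 4 * (A * B))) / (2 * lam) := by
  rw [largeRoot]
  ring_nf

theorem largeRoot_isRoot (hlam : lam ≠ 0) (hAB : 0 ≤ A * B) :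
    lam * ((largeRoot μ σ A B lam + μ) * (largeRoot μ σ A B lam + σ)) =
      A * (largeRoot μ σ A B lam + σ) + B * (largeRoot μ σ A B lam + μ) := by
  set s := √(((σ - μ) * lam + A - B) ^ 2 + 4 * (A * B))
  have hdisc : discrim lam ((μ + σ) * lam - A - B) (μ * σ * lam - A * σ - B * μ) = s * s := by
    rw [Real.mul_self_sqrt (by positivity), discrim]
    ring
  have hroot := (quadratic_eq_zero_iff hlam hdisc (largeRoot μ σ A B lam)).mpr
    (Or.inl (by rw [largeRoot_eq]; ring))
  linear_combination hroot

theorem largeRoot_add_pos_left (hlam : 0 < lam) (hA : 0 < A) (hB : 0 ≤ B) :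
    0 < largeRoot μ σ A B lam + μ := by
  have hsqrt := Real.abs_le_sqrt (x := (σ - μ) * lam + A - B)
    (y := ((σ - μ) * lam + A - B) ^ 2 + 4 * (A * B)) (by nlinarith)
  rw [largeRoot_eq, div_add' _ _ _ (by positivity)]
  apply div_pos _ (by positivity)
  linarith [le_abs_self ((σ - μ) * lam + A - B)]

theorem largeRoot_add_pos_right (hlam : 0 < lam) (hA : 0 ≤ A) (hB : 0 < B) :
    0 < largeRoot μ σ A B lam + σ := by
  have hsqrt := Real.abs_le_sqrt (x := (σ - μ) * lam + A - B)
    (y := ((σ - μ) * lam + A - B) ^ 2 + 4 * (A * B)) (by nlinarith)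
  rw [largeRoot_eq, div_add' _ _ _ (by positivity)]
  apply div_pos _ (by positivity)
  linarith [neg_abs_le ((σ - μ) * lam + A - B)]

theorem antitoneOn_div_add_div (hA : 0 ≤ A) (hB : 0 ≤ B) :
    AntitoneOn (fun d => A / (d + μ) + B / (d + σ)) {d | 0 < d + μ ∧ 0 < d + σ} := by
  rintro d ⟨hdμ, hdσ⟩ e ⟨heμ, heσ⟩ hde
  dsimp only
  gcongr

theorem strictAntiOn_largeRoot (hA : 0 < A) (hB : 0 < B) :
    StrictAntiOn (largeRoot μ σ A B) (Ioi 0) := by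
  have hpos : MapsTo (largeRoot μ σ A B) (Ioi 0) {d | 0 < d + μ ∧ 0 < d + σ} :=
    fun lam hlam =>
      ⟨largeRoot_add_pos_left hlam hA hB.le, largeRoot_add_pos_right hlam hA.le hB⟩
  refine strictAntiOn_of_leftInvOn_of_antitoneOn (antitoneOn_div_add_div hA.le hB.le) hpos ?_
  intro lam hlam
  obtain ⟨hμ, hσ⟩ := hpos hlam
  have hroot := largeRoot_isRoot (μ := μ) (σ := σ) hlam.ne' (mul_pos hA hB).le
  field_simp
  linear_combination -hroot

end LargeRoot

theorem delta₂_eq_largeRoot (μ σ α γ β lam : ℝ) :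
    delta₂ μ σ α γ β lam =
      largeRoot μ σ (β * α * bβ μ σ α γ β) (β * γ * aβ μ σ α γ β) lam :=
  rfl

section ConstantSolution

variable {μ σ α γ β : ℝ}

theorem mul_lt_sq_mul_mul (hμ : 0 < μ) (hσ : 0 < σ) (hβα : μ < β * α) (hβγ : σ < β * γ) :
    μ * σ < β ^ 2 * α * γ := by
  calc μ * σ < (β * α) * (β * γ) := mul_lt_mul'' hβα hβγ hμ.le hσ.le
    _ = β ^ 2 * α * γ := by ring

theorem aβ_pos (hμ : 0 < μ) (hσ : 0 < σ) (hβα : μ < β * α) (hβγ : σ < β * γ) :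
    0 < aβ μ σ α γ β :=
  div_pos (mul_pos (sub_pos.mpr hβα) hσ) (sub_pos.mpr (mul_lt_sq_mul_mul hμ hσ hβα hβγ))

theorem bβ_pos (hμ : 0 < μ) (hσ : 0 < σ) (hβα : μ < β * α) (hβγ : σ < β * γ) :
    0 < bβ μ σ α γ β :=
  div_pos (mul_pos (sub_pos.mpr hβγ) hμ) (sub_pos.mpr (mul_lt_sq_mul_mul hμ hσ hβα hβγ))

end ConstantSolution

/-- For α > γ > 0, σ ≥ μ > 0 and fixed β > σ/γ, the map λ ↦ δ₂(β, λ)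
is strictly decreasing on (0, ∞). -/
theorem delta2_strictAntiOn_lam
    (μ σ α γ β : ℝ) (hαγ : γ < α) (hγ : 0 < γ) (hμσ : μ ≤ σ) (hμ : 0 < μ)
    (hβ : σ / γ < β) :
    StrictAntiOn (fun lam : ℝ => delta₂ μ σ α γ β lam) (Set.Ioi 0) := by
  have hσ : 0 < σ := hμ.trans_le hμσ
  have hβγ : σ < β * γ := (div_lt_iff₀ hγ).mp hβ
  have hβ0 : 0 < β := (div_pos hσ hγ).trans hβ
  have hβα : μ < β * α := by
    calc μ ≤ σ := hμσ
      _ < β * γ := hβγ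
      _ < β * α := mul_lt_mul_of_pos_left hαγ hβ0
  simp only [delta₂_eq_largeRoot]
  exact strictAntiOn_largeRoot
    (mul_pos (hμ.trans hβα) (bβ_pos hμ hσ hβα hβγ))
    (mul_pos (hσ.trans hβγ) (aβ_pos hμ hσ hβα hβγ))
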